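/- arXiv:2308.16728 — 2 statements merged into one kernel-verified Lean document; each statement's English description precedes it below -/
import Mathlib

section
/- For every prime power q, f(q², C_6) ≤ 2q, where C_6 denotes the cycle of length 6. -/
open SimpleGraph

/-- `G` is an `(r,k)`-graph: its vertex set can be partitioned into `r` parts,
each of size at most `k`, with at least one edge between any two distinct parts. -/
def IsRKGraph {V : Type} [Fintype V] (G : SimpleGraph V) (r k : ℕ) : Prop :=
  ∃ P : Fin r → Finset V,
    (∀ v : V, ∃! i, v ∈ P i) ∧
    (∀ i, (P i).card ≤ k) ∧
    ∀ i j : Fin r, i ≠ j → ∃ u ∈ P i, ∃ w ∈ P j, G.Adj u w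

/-- `G` contains a subgraph isomorphic to `H`. -/
def ContainsSub {W V : Type} (H : SimpleGraph W) (G : SimpleGraph V) : Prop :=
  ∃ f : H →g G, Function.Injective f

/-- `f(r,H)`: the minimum `k` for which there exists an `H`-free `(r,k)`-graph. -/
noncomputable def fGraph {W : Type} (H : SimpleGraph W) (r : ℕ) : ℕ :=
  sInf {k | ∃ (n : ℕ) (G : SimpleGraph (Fin n)), ¬ ContainsSub H G ∧ IsRKGraph G r k}

open Finset

/-!
The graph on points `(a, b, c)` and lines `[x, y, z]` over a field `K` of order `q`, with
`(a, b, c)` on `[x, y, z]` iff `y = x a + b` and `z = x b + c`, has no hexagon: going around a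
hexagon and eliminating the last two coordinates forces two of its points or two of its lines to
coincide. Its `2 q³` vertices split into `q²` parts indexed by `(a, b)` for points and `(x, z)`
for lines, each with `q` points and `q` lines, and every two parts are joined by an edge, since
`(a, b, z - x b)` lies on `[x, x a + b, z]`.
-/

section RKGraph

variable {V V' W ι : Type}

lemma ContainsSub.of_embedding {H : SimpleGraph W} {G : SimpleGraph V} {G' : SimpleGraph V'}
    (h : ContainsSub H G) (e : G ↪g G') : ContainsSub H G' := by
  obtain ⟨f, hf⟩ := h
  exact ⟨e.toHom.comp f, e.injective.comp hf⟩

lemma IsRKGraph.of_iso [Fintype V] [Fintype V'] {G : SimpleGraph V} {G' : SimpleGraph V'}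
    {r k : ℕ} (h : IsRKGraph G r k) (e : G ≃g G') : IsRKGraph G' r k := by
  obtain ⟨P, huniq, hcard, hedge⟩ := h
  refine ⟨fun i => (P i).map e.toEquiv.toEmbedding, fun v => ?_, fun i => ?_, fun i j hij => ?_⟩
  · obtain ⟨i, hi, hunique⟩ := huniq (e.symm v)
    refine ⟨i, mem_map_equiv.mpr hi, fun j hj => hunique j (mem_map_equiv.mp hj)⟩
  · simpa using hcard i
  · obtain ⟨u, hu, w, hw, huw⟩ := hedge i j hij
    exact ⟨e u, mem_map_of_mem _ hu, e w, mem_map_of_mem _ hw, e.map_adj_iff.mpr huw⟩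

lemma isRKGraph_of_fibres [Fintype V] [Fintype ι] [DecidableEq ι] (G : SimpleGraph V)
    (π : V → ι) {k : ℕ} (hcard : ∀ i, #{v | π v = i} ≤ k)
    (hedge : ∀ i j, i ≠ j → ∃ u w, π u = i ∧ π w = j ∧ G.Adj u w) :
    IsRKGraph G (Fintype.card ι) k := by
  let e := Fintype.equivFin ι
  refine ⟨fun i => {v | π v = e.symm i}, fun v => ⟨e (π v), by simp, fun i hi => ?_⟩,
    fun i => hcard _, fun i j hij => ?_⟩
  · simp only [mem_filter, mem_univ, true_and] at hi
    simp [hi]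
  · obtain ⟨u, w, hu, hw, huw⟩ := hedge (e.symm i) (e.symm j) (e.symm.injective.ne hij)
    exact ⟨u, by simp [hu], w, by simp [hw], huw⟩

lemma fGraph_le_of_isRKGraph {H : SimpleGraph W} [Fintype V] {G : SimpleGraph V} {r k : ℕ}
    (hH : ¬ ContainsSub H G) (hG : IsRKGraph G r k) : fGraph H r ≤ k :=
  Nat.sInf_le ⟨_, G.overFin rfl, fun h => hH (h.of_embedding (G.overFinIso rfl).symm.toEmbedding),
    hG.of_iso (G.overFinIso rfl)⟩

end RKGraph

section PointLineGraph

variable {K : Type} [Field K]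

def OnLine (p l : K × K × K) : Prop :=
  l.2.1 = l.1 * p.1 + p.2.1 ∧ l.2.2 = l.1 * p.2.1 + p.2.2

lemma OnLine.point_eq_of_fst_eq {p p' l : K × K × K} (h : OnLine p l) (h' : OnLine p' l)
    (hfst : p.1 = p'.1) : p = p' := by
  obtain ⟨a, b, c⟩ := p
  obtain ⟨a', b', c'⟩ := p'
  obtain ⟨h₁, h₂⟩ := h
  obtain ⟨h₁', h₂'⟩ := h'
  dsimp only at hfst h₁ h₂ h₁' h₂'
  subst hfst
  obtain rfl : b = b' := by linear_combination h₁' - h₁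
  obtain rfl : c = c' := by linear_combination h₂' - h₂
  rfl

lemma OnLine.line_eq_of_fst_eq {p l l' : K × K × K} (h : OnLine p l) (h' : OnLine p l')
    (hfst : l.1 = l'.1) : l = l' := by
  obtain ⟨x, y, z⟩ := l
  obtain ⟨x', y', z'⟩ := l'
  obtain ⟨h₁, h₂⟩ := h
  obtain ⟨h₁', h₂'⟩ := h'
  dsimp only at hfst h₁ h₂ h₁' h₂'
  subst hfst
  rw [h₁, h₂, h₁', h₂']

lemma OnLine.hexagon_eq_zero {p₀ p₁ p₂ l₀ l₁ l₂ : K × K × K} (h₀ : OnLine p₀ l₀)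
    (h₁ : OnLine p₁ l₀) (h₂ : OnLine p₁ l₁) (h₃ : OnLine p₂ l₁) (h₄ : OnLine p₂ l₂)
    (h₅ : OnLine p₀ l₂) : (l₁.1 - l₂.1) * (l₁.1 - l₀.1) * (p₁.1 - p₂.1) = 0 := by
  linear_combination (-l₂.1) * (h₁.1 - h₀.1) + (l₁.1 - l₀.1 - l₂.1) * (h₃.1 - h₂.1) -
    l₀.1 * (h₅.1 - h₄.1) - (h₁.2 - h₀.2) - (h₃.2 - h₂.2) - (h₅.2 - h₄.2)

lemma OnLine.not_hexagon {p₀ p₁ p₂ l₀ l₁ l₂ : K × K × K} (h₀ : OnLine p₀ l₀)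
    (h₁ : OnLine p₁ l₀) (h₂ : OnLine p₁ l₁) (h₃ : OnLine p₂ l₁) (h₄ : OnLine p₂ l₂)
    (h₅ : OnLine p₀ l₂) (hp : p₁ ≠ p₂) (hl₀₁ : l₀ ≠ l₁) (hl₁₂ : l₁ ≠ l₂) : False := by
  have hx₀ : l₁.1 - l₀.1 ≠ 0 := sub_ne_zero.mpr fun h => hl₀₁ (h₁.line_eq_of_fst_eq h₂ h.symm)
  have hx₂ : l₁.1 - l₂.1 ≠ 0 := sub_ne_zero.mpr fun h => hl₁₂ (h₃.line_eq_of_fst_eq h₄ h)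
  have hfst : p₁.1 = p₂.1 := by
    simpa [hx₀, hx₂, sub_eq_zero] using OnLine.hexagon_eq_zero h₀ h₁ h₂ h₃ h₄ h₅
  exact hp (h₂.point_eq_of_fst_eq h₃ hfst)

variable (K) in
/-- Points are the left summand, lines the right one. -/
def pointLineGraph : SimpleGraph ((K × K × K) ⊕ (K × K × K)) where
  Adj v w := match v, w with
    | .inl p, .inr l => OnLine p l
    | .inr l, .inl p => OnLine p l
    | _, _ => False
  symm := ⟨by rintro (p | l) (p' | l') h <;> exact h⟩
  loopless := ⟨by rintro (p | l) h <;> exact h⟩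

lemma pointLineGraph_adj_inl_iff {p : K × K × K} {w : (K × K × K) ⊕ (K × K × K)} :
    (pointLineGraph K).Adj (.inl p) w ↔ ∃ l, w = .inr l ∧ OnLine p l := by
  cases w <;> simp [pointLineGraph]

lemma pointLineGraph_adj_inr_iff {l : K × K × K} {w : (K × K × K) ⊕ (K × K × K)} :
    (pointLineGraph K).Adj (.inr l) w ↔ ∃ p, w = .inl p ∧ OnLine p l := by
  cases w <;> simp [pointLineGraph]

lemma pointLineGraph_not_containsSub_cycleGraph_six :
    ¬ ContainsSub (cycleGraph 6) (pointLineGraph K) := by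
  rintro ⟨f, hf⟩
  have hadj (i : Fin 6) : (pointLineGraph K).Adj (f i) (f (i + 1)) :=
    f.map_adj ((cycleGraph_adj (n := 4)).mpr (Or.inr (add_sub_cancel_left i 1)))
  obtain ⟨r, p₀, hr⟩ : ∃ r, ∃ p, f r = .inl p := by
    rcases h : f 0 with p | l
    · exact ⟨0, p, h⟩
    · obtain ⟨p, hp, -⟩ := pointLineGraph_adj_inr_iff.mp (h ▸ hadj 0)
      exact ⟨1, p, hp⟩
  set g : Fin 6 → (K × K × K) ⊕ (K × K × K) := fun i => f (r + i) with hg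
  have hg_ne (i j : Fin 6) (hij : i ≠ j) : g i ≠ g j := (hf.comp (add_right_injective r)).ne hij
  have step (i j : Fin 6) (hij : j = i + 1) : (pointLineGraph K).Adj (g i) (g j) := by
    simpa [hg, hij, add_assoc] using hadj (r + i)
  have hg₀ : g 0 = .inl p₀ := by simp [hg, hr]
  obtain ⟨l₀, e₁, a₀⟩ := pointLineGraph_adj_inl_iff.mp (hg₀ ▸ step 0 1 (by decide))
  obtain ⟨p₁, e₂, a₁⟩ := pointLineGraph_adj_inr_iff.mp (e₁ ▸ step 1 2 (by decide))
  obtain ⟨l₁, e₃, a₂⟩ := pointLineGraph_adj_inl_iff.mp (e₂ ▸ step 2 3 (by decide))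
  obtain ⟨p₂, e₄, a₃⟩ := pointLineGraph_adj_inr_iff.mp (e₃ ▸ step 3 4 (by decide))
  obtain ⟨l₂, e₅, a₄⟩ := pointLineGraph_adj_inl_iff.mp (e₄ ▸ step 4 5 (by decide))
  have a₅ : OnLine p₀ l₂ := by
    simpa [hg₀, e₅, pointLineGraph] using step 5 0 (by decide)
  refine a₀.not_hexagon a₁ a₂ a₃ a₄ a₅ ?_ ?_ ?_
  · exact fun h => hg_ne 2 4 (by decide) (by rw [e₂, e₄, h])
  · exact fun h => hg_ne 1 3 (by decide) (by rw [e₁, e₃, h])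
  · exact fun h => hg_ne 3 5 (by decide) (by rw [e₃, e₅, h])

def pointLinePart : (K × K × K) ⊕ (K × K × K) → K × K
  | .inl p => (p.1, p.2.1)
  | .inr l => (l.1, l.2.2)

lemma card_filter_pointLinePart_le [Fintype K] [DecidableEq K] (i : K × K) :
    #{v | pointLinePart v = i} ≤ 2 * Fintype.card K :=
  calc #{v | pointLinePart v = i}
      ≤ #(univ.image (Sum.elim (fun c => .inl (i.1, i.2, c)) fun y => .inr (i.1, y, i.2) :
          K ⊕ K → (K × K × K) ⊕ (K × K × K))) := by
        refine card_le_card ?_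
        rintro (⟨a, b, c⟩ | ⟨x, y, z⟩) hv <;> obtain ⟨-, rfl⟩ := mem_filter.mp hv <;>
          simp [pointLinePart]
    _ ≤ Fintype.card (K ⊕ K) := card_image_le
    _ = 2 * Fintype.card K := by simp [two_mul]

lemma exists_adj_pointLinePart (i j : K × K) :
    ∃ u w, pointLinePart u = i ∧ pointLinePart w = j ∧ (pointLineGraph K).Adj u w :=
  ⟨.inl (i.1, i.2, j.2 - j.1 * i.2), .inr (j.1, j.1 * i.1 + i.2, j.2), rfl, rfl, rfl, by ring⟩

theorem fGraph_cycleGraph_six_le (K : Type) [Field K] [Fintype K] :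
    fGraph (cycleGraph 6) (Fintype.card K ^ 2) ≤ 2 * Fintype.card K := by
  classical
  have hparts : Fintype.card (K × K) = Fintype.card K ^ 2 := by simp [sq]
  exact fGraph_le_of_isRKGraph pointLineGraph_not_containsSub_cycleGraph_six
    (hparts ▸ isRKGraph_of_fibres _ pointLinePart card_filter_pointLinePart_le
      fun i j _ => exists_adj_pointLinePart i j)

end PointLineGraph

/-- For every prime power `q`, `f(q², C_6) ≤ 2q`. -/
theorem stmt16 (q : ℕ) (hq : IsPrimePow q) :
    fGraph (SimpleGraph.cycleGraph 6) (q ^ 2) ≤ 2 * q := by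
  obtain ⟨_⟩ : Nonempty (Field (Fin q)) := Fintype.nonempty_field_iff.mpr (by simpa using hq)
  simpa using fGraph_cycleGraph_six_le (Fin q)
end

section
/- For every odd prime power s, f_3(s², {𝒞_2^{(3)}, 𝒞_3^{(3)}, 𝒞_4^{(3)}}) ≤ s² − 1. -/
/-- An `m`-uniform edge set: every edge has exactly `m` vertices. -/
def IsUniform (m : ℕ) {n : ℕ} (E : Finset (Finset (Fin n))) : Prop :=
  ∀ e ∈ E, e.card = m

/-- The hypergraph with edge set `GE` contains a subhypergraph isomorphic to the
hypergraph with edge set `HE`: there is an injection of vertices sending every edge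
of `HE` to an edge of `GE`. -/
def HypContains {n N : ℕ} (HE : Finset (Finset (Fin n))) (GE : Finset (Finset (Fin N))) : Prop :=
  ∃ f : Fin n → Fin N, Function.Injective f ∧ ∀ e ∈ HE, e.image f ∈ GE

/-- The hypergraph with edge set `GE` is an `(r,k)`-hypergraph (`m`-uniform setting):
its vertex set can be partitioned into `r` parts of size at most `k` so that for every
`m`-element set of parts there is an edge meeting each of those parts in exactly one vertex. -/
def IsRKHyper {N : ℕ} (GE : Finset (Finset (Fin N))) (m r k : ℕ) : Prop :=
  ∃ P : Fin r → Finset (Fin N),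
    (∀ v : Fin N, ∃! i, v ∈ P i) ∧
    (∀ i, (P i).card ≤ k) ∧
    ∀ S : Finset (Fin r), S.card = m → ∃ e ∈ GE, ∀ i ∈ S, (e ∩ P i).card = 1

/-- A hypergraph: a number of vertices together with an edge set. -/
abbrev Hyp := (n : ℕ) × Finset (Finset (Fin n))

/-- `f_m(r, ℋ)`: the minimum `k` for which there is an `ℋ`-free `m`-uniform
`(r,k)`-hypergraph. -/
noncomputable def fHyper (m r : ℕ) (ℋ : Set Hyp) : ℕ :=
  sInf {k | ∃ (N : ℕ) (GE : Finset (Finset (Fin N))),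
    IsUniform m GE ∧ (∀ H ∈ ℋ, ¬ HypContains H.2 GE) ∧ IsRKHyper GE m r k}

/-- A hypergraph is a Berge cycle of length `ℓ` (in the `m`-uniform setting) if it is
`m`-uniform and there are distinct vertices `v_1,…,v_ℓ` and distinct edges `e_1,…,e_ℓ`
(the edges of the hypergraph being exactly `e_1,…,e_ℓ`) with `{v_i, v_{i+1}} ⊆ e_i`
for all `i`, indices modulo `ℓ`. -/
def IsBergeCycle (m ℓ : ℕ) (H : Hyp) : Prop :=
  IsUniform m H.2 ∧
  ∃ (v : ZMod ℓ → Fin H.1) (e : ZMod ℓ → Finset (Fin H.1)),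
    Function.Injective v ∧ Function.Injective e ∧
    (∀ i, e i ∈ H.2) ∧ (∀ b ∈ H.2, ∃ i, e i = b) ∧
    ∀ i, ({v i, v (i + 1)} : Finset (Fin H.1)) ⊆ e i

/-- `𝒞_ℓ^{(m)}`: the family of all `m`-uniform hypergraphs that are Berge cycles
of length `ℓ`. -/
def bergeCycles (m ℓ : ℕ) : Set Hyp := {H | IsBergeCycle m ℓ H}


section BergeConstruction

open Finset

variable {F : Type*} [Field F] [DecidableEq F]

/-- Send a field element to a nonzero element (identity on nonzero elements). -/
def nzF (x : F) : {y : F // y ≠ 0} := if h : x = 0 then ⟨1, one_ne_zero⟩ else ⟨x, h⟩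

lemma nzF_val {x : F} (h : x ≠ 0) : (nzF x : F) = x := by simp [nzF, h]

/-- The label of the vertex in part `x` of the edge indexed by the triple `T`. -/
def labelAt (T : Finset F) (x : F) : F := ∏ u ∈ T.erase x, (u - x)

lemma labelAt_ne_zero (T : Finset F) (x : F) : labelAt T x ≠ 0 :=
  Finset.prod_ne_zero_iff.2 fun u hu => sub_ne_zero.2 (Finset.ne_of_mem_erase hu)

/-- The edge associated to a triple `T` of parts. -/
def edgeOf (T : Finset F) : Finset (F × {y : F // y ≠ 0}) :=
  T.image fun x => (x, nzF (labelAt T x))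

lemma mem_edgeOf {T : Finset F} {y : F × {y : F // y ≠ 0}} :
    y ∈ edgeOf T ↔ ∃ x ∈ T, (x, nzF (labelAt T x)) = y := Finset.mem_image

lemma fst_mem_of_mem_edgeOf {T : Finset F} {y : F × {y : F // y ≠ 0}}
    (h : y ∈ edgeOf T) : y.1 ∈ T := by
  obtain ⟨x, hx, rfl⟩ := mem_edgeOf.1 h
  exact hx

lemma snd_of_mem_edgeOf {T : Finset F} {y : F × {y : F // y ≠ 0}}
    (h : y ∈ edgeOf T) : (y.2 : F) = labelAt T y.1 := by
  obtain ⟨x, hx, rfl⟩ := mem_edgeOf.1 h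
  exact nzF_val (labelAt_ne_zero T x)

lemma eq_of_fst_eq {T : Finset F} {y z : F × {y : F // y ≠ 0}}
    (hy : y ∈ edgeOf T) (hz : z ∈ edgeOf T) (h : y.1 = z.1) : y = z := by
  obtain ⟨x, hx, rfl⟩ := mem_edgeOf.1 hy
  obtain ⟨x', hx', rfl⟩ := mem_edgeOf.1 hz
  simp only at h
  subst h
  rfl

lemma image_fst_edgeOf (T : Finset F) : (edgeOf T).image Prod.fst = T := by
  rw [edgeOf, Finset.image_image]
  exact Finset.image_id

lemma card_edgeOf (T : Finset F) : (edgeOf T).card = T.card :=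
  Finset.card_image_of_injective _ fun a b h => congrArg Prod.fst h

/-- A 3-element set containing two given distinct elements. -/
lemma three_rep {T : Finset F} (hT : T.card = 3) {x y : F}
    (hx : x ∈ T) (hy : y ∈ T) (hxy : x ≠ y) :
    ∃ z, z ≠ x ∧ z ≠ y ∧ T = {x, y, z} := by
  have hy' : y ∈ T.erase x := Finset.mem_erase.2 ⟨hxy.symm, hy⟩
  have h1 : ((T.erase x).erase y).card = 1 := by
    rw [Finset.card_erase_of_mem hy', Finset.card_erase_of_mem hx, hT]
  obtain ⟨z, hz⟩ := Finset.card_eq_one.1 h1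
  have hzmem : z ∈ (T.erase x).erase y := by rw [hz]; exact Finset.mem_singleton_self z
  refine ⟨z, Finset.ne_of_mem_erase (Finset.mem_of_mem_erase hzmem), Finset.ne_of_mem_erase hzmem, ?_⟩
  have : T = insert x (insert y ((T.erase x).erase y)) := by
    rw [Finset.insert_erase hy', Finset.insert_erase hx]
  rw [this, hz]

lemma labelAt_triple {x y z : F} (hxy : x ≠ y) (hxz : x ≠ z) (hyz : y ≠ z) :
    labelAt {x, y, z} x = (y - x) * (z - x) := by
  have h1 : ({x, y, z} : Finset F).erase x = {y, z} := by
    rw [show ({x, y, z} : Finset F) = insert x {y, z} from rfl,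
      Finset.erase_insert (by simp [hxy, hxz])]
  rw [labelAt, h1, Finset.prod_insert (by simp [hyz]), Finset.prod_singleton]

lemma triple_comm (x y z : F) : ({x, y, z} : Finset F) = ({y, x, z} : Finset F) := by
  ext w; simp only [Finset.mem_insert, Finset.mem_singleton]; tauto

lemma labelAt_triple_mid {x y z : F} (hxy : x ≠ y) (hxz : x ≠ z) (hyz : y ≠ z) :
    labelAt {x, y, z} y = (x - y) * (z - y) := by
  rw [triple_comm]
  exact labelAt_triple hxy.symm hyz hxz

end BergeConstruction

section Core

open Finset

variable {F : Type*} [Field F] [DecidableEq F]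

lemma noC2 {T₁ T₂ : Finset F} (h₁ : T₁.card = 3) (h₂ : T₂.card = 3) (hne : T₁ ≠ T₂)
    {y z : F × {y : F // y ≠ 0}} (hyz : y ≠ z)
    (hy₁ : y ∈ edgeOf T₁) (hz₁ : z ∈ edgeOf T₁)
    (hy₂ : y ∈ edgeOf T₂) (hz₂ : z ∈ edgeOf T₂) : False := by
  have hpq : y.1 ≠ z.1 := fun h => hyz (eq_of_fst_eq hy₁ hz₁ h)
  obtain ⟨t, ht1, ht2, hT1⟩ := three_rep h₁ (fst_mem_of_mem_edgeOf hy₁)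
    (fst_mem_of_mem_edgeOf hz₁) hpq
  obtain ⟨t', ht1', ht2', hT2⟩ := three_rep h₂ (fst_mem_of_mem_edgeOf hy₂)
    (fst_mem_of_mem_edgeOf hz₂) hpq
  have hlab : labelAt T₁ y.1 = labelAt T₂ y.1 := by
    rw [← snd_of_mem_edgeOf hy₁, ← snd_of_mem_edgeOf hy₂]
  rw [hT1, hT2, labelAt_triple hpq (Ne.symm ht1) (Ne.symm ht2),
    labelAt_triple hpq (Ne.symm ht1') (Ne.symm ht2')] at hlab
  have ht : t = t' := by
    have := mul_left_cancel₀ (sub_ne_zero.2 hpq.symm) hlab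
    exact sub_left_inj.1 this
  exact hne (by rw [hT1, hT2, ht])

lemma noC3 (h2F : (2 : F) ≠ 0) {T₁ T₂ T₃ : Finset F}
    (h₁ : T₁.card = 3) (h₂ : T₂.card = 3) (h₃ : T₃.card = 3) (h12 : T₁ ≠ T₂)
    {y₁ y₂ y₃ : F × {y : F // y ≠ 0}}
    (hy12 : y₁ ≠ y₂) (hy23 : y₂ ≠ y₃) (hy31 : y₃ ≠ y₁)
    (m11 : y₁ ∈ edgeOf T₁) (m21 : y₂ ∈ edgeOf T₁)
    (m22 : y₂ ∈ edgeOf T₂) (m32 : y₃ ∈ edgeOf T₂)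
    (m33 : y₃ ∈ edgeOf T₃) (m13 : y₁ ∈ edgeOf T₃) : False := by
  set p1 := y₁.1 with hp1
  set p2 := y₂.1 with hp2
  set p3 := y₃.1 with hp3
  have hp12 : p1 ≠ p2 := fun h => hy12 (eq_of_fst_eq m11 m21 h)
  have hp23 : p2 ≠ p3 := fun h => hy23 (eq_of_fst_eq m22 m32 h)
  have hp31 : p3 ≠ p1 := fun h => hy31 (eq_of_fst_eq m33 m13 h)
  obtain ⟨a, ha1, ha2, hT1⟩ := three_rep h₁ (fst_mem_of_mem_edgeOf m11)
    (fst_mem_of_mem_edgeOf m21) hp12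
  obtain ⟨b, hb1, hb2, hT2⟩ := three_rep h₂ (fst_mem_of_mem_edgeOf m22)
    (fst_mem_of_mem_edgeOf m32) hp23
  obtain ⟨c, hc1, hc2, hT3⟩ := three_rep h₃ (fst_mem_of_mem_edgeOf m33)
    (fst_mem_of_mem_edgeOf m13) hp31
  -- label equations
  have E₂ : (p1 - p2) * (a - p2) = (p3 - p2) * (b - p2) := by
    have h := (snd_of_mem_edgeOf m21).symm.trans (snd_of_mem_edgeOf m22)
    rwa [hT1, hT2, labelAt_triple_mid hp12 (Ne.symm ha1) (Ne.symm ha2),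
      labelAt_triple hp23 (Ne.symm hb1) (Ne.symm hb2)] at h
  have E₃ : (p2 - p3) * (b - p3) = (p1 - p3) * (c - p3) := by
    have h := (snd_of_mem_edgeOf m32).symm.trans (snd_of_mem_edgeOf m33)
    rwa [hT2, hT3, labelAt_triple_mid hp23 (Ne.symm hb1) (Ne.symm hb2),
      labelAt_triple hp31 (Ne.symm hc1) (Ne.symm hc2)] at h
  have E₁ : (p3 - p1) * (c - p1) = (p2 - p1) * (a - p1) := by
    have h := (snd_of_mem_edgeOf m13).symm.trans (snd_of_mem_edgeOf m11)
    rwa [hT3, hT1, labelAt_triple_mid hp31 (Ne.symm hc1) (Ne.symm hc2),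
      labelAt_triple hp12 (Ne.symm ha1) (Ne.symm ha2)] at h
  have hn12 : p1 - p2 ≠ 0 := sub_ne_zero.2 hp12
  have hn13 : p1 - p3 ≠ 0 := sub_ne_zero.2 (Ne.symm hp31)
  have hn23 : p2 - p3 ≠ 0 := sub_ne_zero.2 hp23
  have Q1 : (p3 + b - p1 - a) * (p1 - p2) ^ 2 + (p1 + c - p2 - b) * (p1 - p3) ^ 2 = 0 := by
    linear_combination (p2 - p1) * E₂ + (p3 - p1) * E₃
  have Q2 : (p1 + c - p2 - b) * (p2 - p3) ^ 2 + (p2 + a - p3 - c) * (p2 - p1) ^ 2 = 0 := by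
    linear_combination (p3 - p2) * E₃ + (p1 - p2) * E₁
  have Q3 : (p3 + b - p1 - a) * (p3 - p2) ^ 2 + (p2 + a - p3 - c) * (p3 - p1) ^ 2 = 0 := by
    linear_combination (p2 - p3) * E₂ + (p1 - p3) * E₁
  have hγ2 : (2 : F) * ((p2 + a - p3 - c) * ((p1 - p2) ^ 2 * (p1 - p3) ^ 2)) = 0 := by
    linear_combination (p1 - p2) ^ 2 * Q3 - (p2 - p3) ^ 2 * Q1 + (p1 - p3) ^ 2 * Q2
  have hγ : p2 + a - p3 - c = 0 := by
    rcases mul_eq_zero.1 hγ2 with h | h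
    · exact absurd h h2F
    rcases mul_eq_zero.1 h with h' | h'
    · exact h'
    rcases mul_eq_zero.1 h' with h'' | h''
    · exact absurd h'' (pow_ne_zero _ hn12)
    · exact absurd h'' (pow_ne_zero _ hn13)
  have hα : p3 + b - p1 - a = 0 := by
    have h0 : (p3 + b - p1 - a) * (p3 - p2) ^ 2 = 0 := by
      linear_combination Q3 - (p3 - p1) ^ 2 * hγ
    rcases mul_eq_zero.1 h0 with h | h
    · exact h
    · exact absurd h (pow_ne_zero _ (sub_ne_zero.2 (Ne.symm hp23)))
  have ha : a = p3 := by
    have h0 : (p3 - p1) * (p3 - a) = 0 := by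
      linear_combination (p3 - p2) * hα + E₂
    rcases mul_eq_zero.1 h0 with h | h
    · exact absurd h (sub_ne_zero.2 hp31)
    · exact (sub_eq_zero.1 h).symm
  have hb : b = p1 := by
    have h0 : (p1 - p3) * (p1 - b) = 0 := by
      linear_combination -(p1 - p2) * hα - E₂
    rcases mul_eq_zero.1 h0 with h | h
    · exact absurd h hn13
    · exact (sub_eq_zero.1 h).symm
  apply h12
  rw [hT1, hT2, ha, hb]
  ext w
  simp only [Finset.mem_insert, Finset.mem_singleton]
  tauto

end Core

section Core2

open Finset

variable {F : Type*} [Field F] [DecidableEq F]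

lemma noC4 (h2F : (2 : F) ≠ 0) {T₁ T₂ T₃ T₄ : Finset F}
    (h₁ : T₁.card = 3) (h₂ : T₂.card = 3) (h₃ : T₃.card = 3) (h₄ : T₄.card = 3)
    (h12 : T₁ ≠ T₂) (h23 : T₂ ≠ T₃)
    {y₁ y₂ y₃ y₄ : F × {y : F // y ≠ 0}}
    (hy12 : y₁ ≠ y₂) (hy23 : y₂ ≠ y₃) (hy34 : y₃ ≠ y₄) (hy41 : y₄ ≠ y₁)
    (m11 : y₁ ∈ edgeOf T₁) (m21 : y₂ ∈ edgeOf T₁)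
    (m22 : y₂ ∈ edgeOf T₂) (m32 : y₃ ∈ edgeOf T₂)
    (m33 : y₃ ∈ edgeOf T₃) (m43 : y₄ ∈ edgeOf T₃)
    (m44 : y₄ ∈ edgeOf T₄) (m14 : y₁ ∈ edgeOf T₄) : False := by
  set p1 := y₁.1 with hp1
  set p2 := y₂.1 with hp2
  set p3 := y₃.1 with hp3
  set p4 := y₄.1 with hp4
  have hp12 : p1 ≠ p2 := fun h => hy12 (eq_of_fst_eq m11 m21 h)
  have hp23 : p2 ≠ p3 := fun h => hy23 (eq_of_fst_eq m22 m32 h)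
  have hp34 : p3 ≠ p4 := fun h => hy34 (eq_of_fst_eq m33 m43 h)
  have hp41 : p4 ≠ p1 := fun h => hy41 (eq_of_fst_eq m44 m14 h)
  obtain ⟨a, ha1, ha2, hT1⟩ := three_rep h₁ (fst_mem_of_mem_edgeOf m11)
    (fst_mem_of_mem_edgeOf m21) hp12
  obtain ⟨b, hb1, hb2, hT2⟩ := three_rep h₂ (fst_mem_of_mem_edgeOf m22)
    (fst_mem_of_mem_edgeOf m32) hp23
  obtain ⟨c, hc1, hc2, hT3⟩ := three_rep h₃ (fst_mem_of_mem_edgeOf m33)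
    (fst_mem_of_mem_edgeOf m43) hp34
  obtain ⟨d, hd1, hd2, hT4⟩ := three_rep h₄ (fst_mem_of_mem_edgeOf m44)
    (fst_mem_of_mem_edgeOf m14) hp41
  have E₂ : (p1 - p2) * (a - p2) = (p3 - p2) * (b - p2) := by
    have h := (snd_of_mem_edgeOf m21).symm.trans (snd_of_mem_edgeOf m22)
    rwa [hT1, hT2, labelAt_triple_mid hp12 (Ne.symm ha1) (Ne.symm ha2),
      labelAt_triple hp23 (Ne.symm hb1) (Ne.symm hb2)] at h
  have E₃ : (p2 - p3) * (b - p3) = (p4 - p3) * (c - p3) := by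
    have h := (snd_of_mem_edgeOf m32).symm.trans (snd_of_mem_edgeOf m33)
    rwa [hT2, hT3, labelAt_triple_mid hp23 (Ne.symm hb1) (Ne.symm hb2),
      labelAt_triple hp34 (Ne.symm hc1) (Ne.symm hc2)] at h
  have E₄ : (p3 - p4) * (c - p4) = (p1 - p4) * (d - p4) := by
    have h := (snd_of_mem_edgeOf m43).symm.trans (snd_of_mem_edgeOf m44)
    rwa [hT3, hT4, labelAt_triple_mid hp34 (Ne.symm hc1) (Ne.symm hc2),
      labelAt_triple hp41 (Ne.symm hd1) (Ne.symm hd2)] at h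
  have E₁ : (p4 - p1) * (d - p1) = (p2 - p1) * (a - p1) := by
    have h := (snd_of_mem_edgeOf m14).symm.trans (snd_of_mem_edgeOf m11)
    rwa [hT4, hT1, labelAt_triple_mid hp41 (Ne.symm hd1) (Ne.symm hd2),
      labelAt_triple hp12 (Ne.symm ha1) (Ne.symm ha2)] at h
  have key : (2 : F) * ((p1 - p3) * (p2 - p4)) = 0 := by
    linear_combination E₁ - E₂ + E₃ - E₄
  rcases mul_eq_zero.1 key with h | h
  · exact absurd h h2F
  rcases mul_eq_zero.1 h with h13 | h24
  · -- p1 = p3 : then a = b and T₁ = T₂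
    have hp13 : p1 = p3 := sub_eq_zero.1 h13
    have hab : a = b := by
      have h0 : (p1 - p2) * (a - b) = 0 := by
        linear_combination E₂ + (p2 - b) * (sub_eq_zero.2 hp13)
      rcases mul_eq_zero.1 h0 with h' | h'
      · exact absurd h' (sub_ne_zero.2 hp12)
      · exact sub_eq_zero.1 h'
    apply h12
    rw [hT1, hT2, ← hab, show y₃.1 = y₁.1 from hp13.symm]
    ext w
    simp only [Finset.mem_insert, Finset.mem_singleton]
    tauto
  · -- p2 = p4 : then b = c and T₂ = T₃
    have hp24 : p2 = p4 := sub_eq_zero.1 h24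
    have hbc : b = c := by
      have h0 : (p2 - p3) * (b - c) = 0 := by
        linear_combination E₃ + (p3 - c) * (sub_eq_zero.2 hp24)
      rcases mul_eq_zero.1 h0 with h' | h'
      · exact absurd h' (sub_ne_zero.2 hp23)
      · exact sub_eq_zero.1 h'
    apply h23
    rw [hT2, hT3, ← hbc, show y₄.1 = y₂.1 from hp24.symm]
    ext w
    simp only [Finset.mem_insert, Finset.mem_singleton]
    tauto

end Core2

section Wrapper

open Finset

variable {F : Type*} [Field F] [Fintype F] [DecidableEq F]

/-- All edges of the construction. -/
def gEdges (F : Type*) [Field F] [Fintype F] [DecidableEq F] :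
    Finset (Finset (F × {y : F // y ≠ 0})) :=
  (Finset.univ.filter fun T : Finset F => T.card = 3).image edgeOf

lemma mem_gEdges {X : Finset (F × {y : F // y ≠ 0})} :
    X ∈ gEdges F ↔ ∃ T : Finset F, T.card = 3 ∧ edgeOf T = X := by
  simp [gEdges, Finset.mem_image, Finset.mem_filter]

lemma noBerge (h2F : (2 : F) ≠ 0) (ℓ : ℕ) (hℓ : ℓ = 2 ∨ ℓ = 3 ∨ ℓ = 4)
    (w : ZMod ℓ → F × {y : F // y ≠ 0}) (hw : Function.Injective w)
    (X : ZMod ℓ → Finset (F × {y : F // y ≠ 0})) (hX : Function.Injective X)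
    (hXmem : ∀ i, X i ∈ gEdges F)
    (hcyc : ∀ i, w i ∈ X i ∧ w (i + 1) ∈ X i) : False := by
  have hT : ∀ i, ∃ T : Finset F, T.card = 3 ∧ edgeOf T = X i := fun i => mem_gEdges.1 (hXmem i)
  choose T hT3 hTE using hT
  have hTne : ∀ i j, i ≠ j → T i ≠ T j := fun i j hij h =>
    hij (hX (by rw [← hTE i, ← hTE j, h]))
  have hm : ∀ i, w i ∈ edgeOf (T i) ∧ w (i + 1) ∈ edgeOf (T i) := fun i => by
    rw [hTE i]; exact hcyc i
  rcases hℓ with rfl | rfl | rfl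
  · have e0 : ((0 : ZMod 2) + 1) = 1 := by decide
    have e1 : ((1 : ZMod 2) + 1) = 0 := by decide
    exact noC2 (hT3 0) (hT3 1) (hTne 0 1 (by decide))
      (hw.ne (show (0 : ZMod 2) ≠ 1 by decide))
      (hm 0).1 (e0 ▸ (hm 0).2) (e1 ▸ (hm 1).2) (hm 1).1
  · have e0 : ((0 : ZMod 3) + 1) = 1 := by decide
    have e1 : ((1 : ZMod 3) + 1) = 2 := by decide
    have e2 : ((2 : ZMod 3) + 1) = 0 := by decide
    exact noC3 h2F (hT3 0) (hT3 1) (hT3 2) (hTne 0 1 (by decide))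
      (hw.ne (show (0 : ZMod 3) ≠ 1 by decide))
      (hw.ne (show (1 : ZMod 3) ≠ 2 by decide))
      (hw.ne (show (2 : ZMod 3) ≠ 0 by decide))
      (hm 0).1 (e0 ▸ (hm 0).2) (hm 1).1 (e1 ▸ (hm 1).2) (hm 2).1 (e2 ▸ (hm 2).2)
  · have e0 : ((0 : ZMod 4) + 1) = 1 := by decide
    have e1 : ((1 : ZMod 4) + 1) = 2 := by decide
    have e2 : ((2 : ZMod 4) + 1) = 3 := by decide
    have e3 : ((3 : ZMod 4) + 1) = 0 := by decide
    exact noC4 h2F (hT3 0) (hT3 1) (hT3 2) (hT3 3)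
      (hTne 0 1 (by decide)) (hTne 1 2 (by decide))
      (hw.ne (show (0 : ZMod 4) ≠ 1 by decide))
      (hw.ne (show (1 : ZMod 4) ≠ 2 by decide))
      (hw.ne (show (2 : ZMod 4) ≠ 3 by decide))
      (hw.ne (show (3 : ZMod 4) ≠ 0 by decide))
      (hm 0).1 (e0 ▸ (hm 0).2) (hm 1).1 (e1 ▸ (hm 1).2)
      (hm 2).1 (e2 ▸ (hm 2).2) (hm 3).1 (e3 ▸ (hm 3).2)

end Wrapper



section Transfer

open Finset

lemma transfer {F : Type*} [Field F] [Fintype F] [DecidableEq F] (h2F : (2 : F) ≠ 0)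
    {N n : ℕ} (eV : (F × {y : F // y ≠ 0}) ≃ Fin N)
    (ℓ : ℕ) (hℓ : ℓ = 2 ∨ ℓ = 3 ∨ ℓ = 4)
    (HE : Finset (Finset (Fin n)))
    (hH : ∃ (v : ZMod ℓ → Fin n) (e : ZMod ℓ → Finset (Fin n)),
      Function.Injective v ∧ Function.Injective e ∧ (∀ i, e i ∈ HE) ∧
      ∀ i, ({v i, v (i + 1)} : Finset (Fin n)) ⊆ e i)
    (hcon : HypContains HE ((gEdges F).image fun X => X.image (⇑eV))) : False := by
  obtain ⟨v, e, hvinj, heinj, hemem, hsub⟩ := hH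
  obtain ⟨f, hf, hfE⟩ := hcon
  have hXg : ∀ i, (((e i).image f).image (⇑eV.symm)) ∈ gEdges F := by
    intro i
    obtain ⟨Y, hY, hEq⟩ := Finset.mem_image.1 (hfE _ (hemem i))
    have : (((e i).image f).image (⇑eV.symm)) = Y := by
      rw [← hEq, Finset.image_image, Equiv.symm_comp_self, Finset.image_id]
    rw [this]; exact hY
  have hwinj : Function.Injective (fun i => eV.symm (f (v i))) :=
    fun i j h => hvinj (hf (eV.symm.injective h))
  have hXinj : Function.Injective (fun i => ((e i).image f).image (⇑eV.symm)) := by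
    intro i j h
    exact heinj (Finset.image_injective hf (Finset.image_injective eV.symm.injective h))
  refine noBerge h2F ℓ hℓ _ hwinj _ hXinj hXg fun i => ⟨?_, ?_⟩
  · exact Finset.mem_image_of_mem _ (Finset.mem_image_of_mem _
      (hsub i (Finset.mem_insert_self _ _)))
  · exact Finset.mem_image_of_mem _ (Finset.mem_image_of_mem _
      (hsub i (Finset.mem_insert_of_mem (Finset.mem_singleton_self _))))

end Transfer


/-- For every odd prime power `s`, `f_3(s², {𝒞_2^{(3)}, 𝒞_3^{(3)}, 𝒞_4^{(3)}}) ≤ s² − 1`. -/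
theorem stmt19 (s : ℕ) (hs : IsPrimePow s) (hodd : Odd s) :
    fHyper 3 (s ^ 2) (bergeCycles 3 2 ∪ bergeCycles 3 3 ∪ bergeCycles 3 4) ≤ s ^ 2 - 1 := by
  classical
  obtain ⟨p, k, hp, hk, hpk⟩ := hs
  have hp' : Nat.Prime p := Nat.prime_iff.2 hp
  haveI : Fact (Nat.Prime p) := ⟨hp'⟩
  set F := GaloisField p (2 * k) with hF
  letI : Fintype F := Fintype.ofFinite F
  have hcardF : Fintype.card F = s ^ 2 := by
    rw [Fintype.card_eq_nat_card, GaloisField.card p (2 * k) (by omega), ← hpk,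
      ← pow_mul, mul_comm]
  have hpne2 : p ≠ 2 := by
    rintro rfl
    rw [← hpk] at hodd
    have heven : Even (2 ^ k) := (Nat.even_pow' (by omega)).2 even_two
    exact (Nat.not_even_iff_odd.2 hodd) heven
  have h2F : (2 : F) ≠ 0 := by
    intro h
    have := (CharP.cast_eq_zero_iff F p 2).1 h
    exact hpne2 ((Nat.prime_dvd_prime_iff_eq hp' Nat.prime_two).1 this)
  have hVcard : Fintype.card (F × {y : F // y ≠ 0}) = s ^ 2 * (s ^ 2 - 1) := by
    have hsub : Fintype.card {y : F // y ≠ 0} = s ^ 2 - 1 := by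
      have h1 := Fintype.card_subtype_compl (fun y : F => y = 0)
      rw [Fintype.card_subtype_eq, hcardF] at h1
      exact h1
    rw [Fintype.card_prod, hsub, hcardF]
  set eV : (F × {y : F // y ≠ 0}) ≃ Fin (s ^ 2 * (s ^ 2 - 1)) :=
    Fintype.equivFinOfCardEq hVcard with heV
  set ι : Fin (s ^ 2) ≃ F := (Fintype.equivFinOfCardEq hcardF).symm with hι
  set GE : Finset (Finset (Fin (s ^ 2 * (s ^ 2 - 1)))) :=
    (gEdges F).image (fun X => X.image (⇑eV)) with hGE
  apply Nat.sInf_le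
  refine ⟨s ^ 2 * (s ^ 2 - 1), GE, ?_, ?_, ?_⟩
  · -- uniform
    intro e he
    obtain ⟨X, hXg, rfl⟩ := Finset.mem_image.1 he
    obtain ⟨T, hT3, rfl⟩ := mem_gEdges.1 hXg
    rw [Finset.card_image_of_injective _ eV.injective, card_edgeOf, hT3]
  · -- Berge-cycle free
    intro H hH hcon
    rcases hH with (hH | hH) | hH
    · obtain ⟨-, v, e, hvinj, heinj, hemem, -, hsub⟩ := hH
      exact transfer h2F eV 2 (Or.inl rfl) H.2 ⟨v, e, hvinj, heinj, hemem, hsub⟩ hcon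
    · obtain ⟨-, v, e, hvinj, heinj, hemem, -, hsub⟩ := hH
      exact transfer h2F eV 3 (Or.inr (Or.inl rfl)) H.2 ⟨v, e, hvinj, heinj, hemem, hsub⟩ hcon
    · obtain ⟨-, v, e, hvinj, heinj, hemem, -, hsub⟩ := hH
      exact transfer h2F eV 4 (Or.inr (Or.inr rfl)) H.2 ⟨v, e, hvinj, heinj, hemem, hsub⟩ hcon
  · -- (r,k)-hypergraph
    refine ⟨fun i => Finset.univ.filter (fun x => (eV.symm x).1 = ι i), ?_, ?_, ?_⟩
    · intro x
      refine ⟨ι.symm (eV.symm x).1, by simp, ?_⟩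
      intro j hj
      simp only [Finset.mem_filter, Finset.mem_univ, true_and] at hj
      rw [hj, Equiv.symm_apply_apply]
    · intro i
      have hle : (Finset.univ.filter (fun x => (eV.symm x).1 = ι i)).card ≤
          (Finset.univ : Finset {y : F // y ≠ 0}).card := by
        apply Finset.card_le_card_of_injOn (fun x => (eV.symm x).2)
        · intro x _
          exact Finset.mem_univ _
        · intro x hx y hy hxy
          simp only [Finset.coe_filter, Set.mem_setOf_eq, Finset.mem_univ, true_and] at hx hy
          apply eV.symm.injective
          exact Prod.ext (hx.trans hy.symm) hxy
      rw [Finset.card_univ] at hle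
      have hsub : Fintype.card {y : F // y ≠ 0} = s ^ 2 - 1 := by
        have h1 := Fintype.card_subtype_compl (fun y : F => y = 0)
        rw [Fintype.card_subtype_eq, hcardF] at h1
        exact h1
      rwa [hsub] at hle
    · intro S hS
      obtain ⟨i, j, l, hij, hil, hjl, rfl⟩ := Finset.card_eq_three.1 hS
      have hT3 : ({ι i, ι j, ι l} : Finset F).card = 3 :=
        Finset.card_eq_three.2 ⟨ι i, ι j, ι l, ι.injective.ne hij, ι.injective.ne hil,
          ι.injective.ne hjl, rfl⟩
      refine ⟨(edgeOf {ι i, ι j, ι l}).image (⇑eV),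
        Finset.mem_image_of_mem _ (mem_gEdges.2 ⟨_, hT3, rfl⟩), ?_⟩
      intro m hm
      have hmem : ι m ∈ ({ι i, ι j, ι l} : Finset F) := by
        simp only [Finset.mem_insert, Finset.mem_singleton] at hm ⊢
        rcases hm with rfl | rfl | rfl
        · exact Or.inl rfl
        · exact Or.inr (Or.inl rfl)
        · exact Or.inr (Or.inr rfl)
      have hkey : (edgeOf {ι i, ι j, ι l}).image (⇑eV) ∩
          Finset.univ.filter (fun x => (eV.symm x).1 = ι m) =
          {eV (ι m, nzF (labelAt {ι i, ι j, ι l} (ι m)))} := by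
        ext x
        simp only [Finset.mem_inter, Finset.mem_image, Finset.mem_filter, Finset.mem_univ,
          true_and, Finset.mem_singleton]
        constructor
        · rintro ⟨⟨y, hy, rfl⟩, hfst⟩
          rw [Equiv.symm_apply_apply] at hfst
          obtain ⟨u, hu, rfl⟩ := mem_edgeOf.1 hy
          simp only at hfst
          subst hfst
          rfl
        · rintro rfl
          refine ⟨⟨(ι m, nzF (labelAt {ι i, ι j, ι l} (ι m))), ?_, rfl⟩, ?_⟩
          · exact mem_edgeOf.2 ⟨ι m, hmem, rfl⟩
          · rw [Equiv.symm_apply_apply]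
      rw [hkey, Finset.card_singleton]
end
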